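/- arXiv:math/0307103 — 4 statements merged into one kernel-verified Lean document; each statement's English description precedes it below -/
import Mathlib

section
/- For any r ≤ p+1 distinct points x_1, ..., x_r in ℂ^m, the images of these points under the Veronese-type embedding v_{p,q} (sending a point to the tuple of values of all monomials in the coordinates z_i and their conjugates of degree at most p in the z_i and at most q in the conjugates) are affinely independent, i.e., they span an (r-1)-dimensional affine subspace. -/
open scoped BigOperators

/-- The index set of monomials in `z_0,…,z_{m-1}` and `z̄_0,…,z̄_{m-1}` of degree
at most `p` in the `z_i` and at most `q` in the `z̄_i`. -/
def VeroneseIndex (m p q : ℕ) : Type :=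
  {s : (Fin m → ℕ) × (Fin m → ℕ) // (∑ i, s.1 i) ≤ p ∧ (∑ i, s.2 i) ≤ q}

/-- The Veronese-type embedding `v_{p,q} : ℂ^m → V`, sending a point to the tuple of
values of all such monomials at that point. -/
noncomputable def veronese (m p q : ℕ) (x : Fin m → ℂ) : VeroneseIndex m p q → ℂ :=
  fun s => (∏ i, (x i) ^ (s.1.1 i)) * ∏ i, (starRingEnd ℂ (x i)) ^ (s.1.2 i)

/-!
The images are even linearly independent. A polynomial `f` in the `z_i` alone of degree
at most `p` is a linear combination of coordinates of `v_{p,q}`, so a linear relation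
`∑ w_k v_{p,q}(x_k) = 0` gives `∑ w_k f(x_k) = 0`. For distinct `x_1, …, x_r` with
`r ≤ p + 1`, taking for `f` a product of `r - 1` affine functions, one vanishing at each
`x_k` with `k ≠ j` but not at `x_j`, leaves `w_j f(x_j) = 0`, hence `w_j = 0`.
-/

open MvPolynomial

theorem MvPolynomial.exists_totalDegree_le_eval_ne_zero_of_notMem
    {σ K : Type*} [CommRing K] [IsDomain K] (t : Finset (σ → K)) {y : σ → K} (hy : y ∉ t) :
    ∃ f : MvPolynomial σ K,
      f.totalDegree ≤ t.card ∧ eval y f ≠ 0 ∧ ∀ z ∈ t, eval z f = 0 := by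
  have hsep : ∀ z ∈ t, ∃ i, y i ≠ z i := fun z hz =>
    Function.ne_iff.mp fun hyz => hy (hyz ▸ hz)
  choose i hi using hsep
  refine ⟨∏ z ∈ t.attach, (X (i z.1 z.2) - C (z.1 (i z.1 z.2))), ?_, ?_, fun z hz => ?_⟩
  · refine (totalDegree_finsetProd _ _).trans ?_
    simpa using Finset.sum_le_card_nsmul t.attach _ 1 fun z _ =>
      (totalDegree_sub_C_le _ _).trans (totalDegree_X _).le
  · simpa [Finset.prod_eq_zero_iff, sub_eq_zero] using hi
  · simpa using Finset.prod_eq_zero (Finset.mem_attach t ⟨z, hz⟩) (by simp)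

theorem veronese_apply_of_snd_eq_zero {m p q : ℕ} (x : Fin m → ℂ) (s : VeroneseIndex m p q)
    (hs : s.1.2 = 0) : veronese m p q x s = ∏ i, x i ^ s.1.1 i := by
  simp [veronese, hs]

theorem sum_mul_eval_eq_zero_of_sum_smul_veronese_eq_zero {ι : Type*} {m p : ℕ} (q : ℕ)
    (s : Finset ι) (w : ι → ℂ) (x : ι → Fin m → ℂ)
    (hw : ∑ k ∈ s, w k • veronese m p q (x k) = 0)
    {f : MvPolynomial (Fin m) ℂ} (hf : f.totalDegree ≤ p) :
    ∑ k ∈ s, w k * eval (x k) f = 0 := by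
  have hmono : ∀ d ∈ f.support, ∑ k ∈ s, w k * ∏ i, x k i ^ d i = 0 := by
    intro d hd
    have hdeg : ∑ i, d i ≤ p := by
      simpa [Finsupp.sum_fintype] using (le_totalDegree hd).trans hf
    let e : VeroneseIndex m p q := ⟨(d, 0), hdeg, by simp⟩
    simpa [Finset.sum_apply, veronese_apply_of_snd_eq_zero _ e rfl] using congrFun hw e
  simp_rw [eval_eq', Finset.mul_sum]
  rw [Finset.sum_comm]
  refine Finset.sum_eq_zero fun d hd => ?_
  simp_rw [mul_left_comm (w _), ← Finset.mul_sum, hmono d hd, mul_zero]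

theorem linearIndependent_veronese {ι : Type*} [Fintype ι] {m p : ℕ} (q : ℕ)
    (hcard : Fintype.card ι ≤ p + 1) {x : ι → Fin m → ℂ} (hx : Function.Injective x) :
    LinearIndependent ℂ fun j => veronese m p q (x j) := by
  classical
  rw [linearIndependent_iff']
  intro s w hw j hj
  have hxj : x j ∉ (Finset.univ.erase j).image x := by
    simp [hx.eq_iff]
  obtain ⟨f, hdeg, hfj, hfk⟩ := exists_totalDegree_le_eval_ne_zero_of_notMem _ hxj
  have hdeg' : f.totalDegree ≤ p :=
    calc f.totalDegree ≤ ((Finset.univ.erase j).image x).card := hdeg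
      _ ≤ (Finset.univ.erase j).card := Finset.card_image_le
      _ = Fintype.card ι - 1 := by simp
      _ ≤ p := by omega
  have hsum := sum_mul_eval_eq_zero_of_sum_smul_veronese_eq_zero q s w x hw hdeg'
  rw [Finset.sum_eq_single_of_mem j hj fun k _ hkj =>
    by rw [hfk (x k) (by simpa using ⟨k, hkj, rfl⟩), mul_zero]] at hsum
  exact (mul_eq_zero.mp hsum).resolve_right hfj

/-- For any `r ≤ p+1` distinct points of `ℂ^m`, their images under the Veronese-type
embedding `v_{p,q}` are affinely independent. -/
theorem veronese_affineIndependent (m p q r : ℕ) (hr : r ≤ p + 1)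
    (x : Fin r → (Fin m → ℂ)) (hx : Function.Injective x) :
    AffineIndependent ℂ (fun j => veronese m p q (x j)) :=
  (linearIndependent_veronese q (by simpa using hr) hx).affineIndependent
end

section
/- If S is a finite set of points in a real vector space V such that any 2k of them (or all of them if there are fewer than 2k) are affinely independent, then for any two subsets A, B ⊆ S each of cardinality at most k, the intersection of the convex hulls of A and B equals the convex hull of A ∩ B. -/
theorem convexHull_inter_of_small_subsets_general
    {V : Type*} [AddCommGroup V] [Module ℝ V] [DecidableEq V] (k : ℕ)
    (S : Finset V)
    (hS : ∀ T : Finset V, T ⊆ S → T.card ≤ 2 * k →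
      AffineIndependent ℝ (fun t : (T : Set V) => (t : V)))
    (A B : Finset V) (hA : A ⊆ S) (hB : B ⊆ S) (hAk : A.card ≤ k) (hBk : B.card ≤ k) :
    convexHull ℝ (A : Set V) ∩ convexHull ℝ (B : Set V) =
      convexHull ℝ ((A ∩ B : Finset V) : Set V) := by
  have hAB : (A ∪ B).card ≤ 2 * k := (Finset.card_union_le A B).trans (by omega)
  rw [Finset.coe_inter]
  exact ((hS (A ∪ B) (Finset.union_subset hA hB) hAB).convexHull_inter').symm

/-- If `S` is a finite set in a real vector space such that every subset of `S` of
cardinality at most `2k` is affinely independent, then for any `A, B ⊆ S` of cardinality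
at most `k`, `conv(A) ∩ conv(B) = conv(A ∩ B)`. -/
theorem convexHull_inter_of_small_subsets
    {V : Type*} [AddCommGroup V] [Module ℝ V] [DecidableEq V] (k : ℕ) (hk : 1 ≤ k)
    (S : Finset V)
    (hS : ∀ T : Finset V, T ⊆ S → T.card ≤ 2 * k →
      AffineIndependent ℝ (fun t : (T : Set V) => (t : V)))
    (A B : Finset V) (hA : A ⊆ S) (hB : B ⊆ S) (hAk : A.card ≤ k) (hBk : B.card ≤ k) :
    convexHull ℝ (A : Set V) ∩ convexHull ℝ (B : Set V) =
      convexHull ℝ ((A ∩ B : Finset V) : Set V) :=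
  convexHull_inter_of_small_subsets_general k S hS A B hA hB hAk hBk
end

section
/- If the union A ∪ B of two finite sets in ℝ^N is affinely independent, then a point lying in the relative interiors of both the convex hull of A and the convex hull of B forces A = B. -/
open scoped BigOperators

/-- If `A ∪ B` is an affinely independent finite set in `ℝ^N` and some point lies in the
relative interior of both `conv(A)` and `conv(B)` (i.e. it is a convex combination of the
points of `A` with all weights strictly positive, and likewise for `B`), then `A = B`. -/
theorem eq_of_common_relative_interior_point
    (N : ℕ) (A B : Finset (Fin N → ℝ))
    (hAB : AffineIndependent ℝ ((↑) : ((A ∪ B : Finset (Fin N → ℝ)) : Set (Fin N → ℝ)) → (Fin N → ℝ)))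
    (wA wB : (Fin N → ℝ) → ℝ)
    (hwA : ∀ a ∈ A, 0 < wA a) (hsA : ∑ a ∈ A, wA a = 1)
    (hwB : ∀ b ∈ B, 0 < wB b) (hsB : ∑ b ∈ B, wB b = 1)
    (heq : A.centerMass wA id = B.centerMass wB id) :
    A = B := by
  classical
  set S := A ∪ B with hS
  set wA' : (Fin N → ℝ) → ℝ := fun x => if x ∈ A then wA x else 0 with hwA'
  set wB' : (Fin N → ℝ) → ℝ := fun x => if x ∈ B then wB x else 0 with hwB'
  have hsubA : A ⊆ S := Finset.subset_union_left
  have hsubB : B ⊆ S := Finset.subset_union_right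
  have hsumA : ∑ x ∈ S, wA' x = 1 := by
    rw [← Finset.sum_subset hsubA (fun x _ hx => if_neg hx), ← hsA]
    exact Finset.sum_congr rfl fun x hx => if_pos hx
  have hsumB : ∑ x ∈ S, wB' x = 1 := by
    rw [← Finset.sum_subset hsubB (fun x _ hx => if_neg hx), ← hsB]
    exact Finset.sum_congr rfl fun x hx => if_pos hx
  have hvA : ∑ x ∈ S, wA' x • x = A.centerMass wA id := by
    rw [Finset.centerMass_eq_of_sum_1 _ _ hsA,
      ← Finset.sum_subset hsubA (fun x _ hx => by rw [show wA' x = 0 from if_neg hx, zero_smul])]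
    exact Finset.sum_congr rfl fun x hx => by rw [show wA' x = wA x from if_pos hx]; rfl
  have hvB : ∑ x ∈ S, wB' x • x = B.centerMass wB id := by
    rw [Finset.centerMass_eq_of_sum_1 _ _ hsB,
      ← Finset.sum_subset hsubB (fun x _ hx => by rw [show wB' x = 0 from if_neg hx, zero_smul])]
    exact Finset.sum_congr rfl fun x hx => by rw [show wB' x = wB x from if_pos hx]; rfl
  -- the combined weight
  set w : ((S : Set (Fin N → ℝ))) → ℝ := fun x => wA' x.1 - wB' x.1 with hw
  have hzero : ∀ i, w i = 0 := by
    rw [affineIndependent_iff_of_fintype] at hAB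
    apply hAB
    · have h1 : ∑ i : (S : Set (Fin N → ℝ)), w i = ∑ x ∈ S, (wA' x - wB' x) := by
        exact Finset.sum_coe_sort S (fun x => wA' x - wB' x)
      rw [h1, Finset.sum_sub_distrib, hsumA, hsumB, sub_self]
    · have hsz : ∑ i : (S : Set (Fin N → ℝ)), w i = 0 := by
        have h1 : ∑ i : (S : Set (Fin N → ℝ)), w i = ∑ x ∈ S, (wA' x - wB' x) :=
          Finset.sum_coe_sort S (fun x => wA' x - wB' x)
        rw [h1, Finset.sum_sub_distrib, hsumA, hsumB, sub_self]
      rw [Finset.weightedVSub_eq_linear_combination _ hsz]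
      have h2 : ∑ i : (S : Set (Fin N → ℝ)), w i • (i : Fin N → ℝ)
          = ∑ x ∈ S, (wA' x - wB' x) • x :=
        Finset.sum_coe_sort S (fun x => (wA' x - wB' x) • x)
      rw [h2]
      have : ∀ x ∈ S, (wA' x - wB' x) • x = wA' x • x - wB' x • x := fun x _ => sub_smul _ _ _
      rw [Finset.sum_congr rfl this, Finset.sum_sub_distrib, hvA, hvB, heq, sub_self]
  have key : ∀ x ∈ S, wA' x = wB' x := by
    intro x hx
    have := hzero ⟨x, by exact_mod_cast hx⟩
    simpa [hw, sub_eq_zero] using this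
  ext x
  constructor
  · intro hx
    have h := key x (hsubA hx)
    by_contra hxB
    simp [hwA', hwB', hx, hxB] at h
    exact absurd h (ne_of_gt (hwA x hx))
  · intro hx
    have h := key x (hsubB hx)
    by_contra hxA
    simp [hwA', hwB', hx, hxA] at h
    exact absurd h.symm (ne_of_gt (hwB x hx))
end

section
/- Suppose r ≤ (p+1)/2. Then any two (r−1)-simplices in V with vertices in the image of the Veronese-type embedding v_{p,q} of ℂ^m are either disjoint or meet along a common face. Precisely: if A and B are sets of at most r points each in the image of v_{p,q} on distinct points of ℂ^m, then conv(A) ∩ conv(B) = conv(A ∩ B). -/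
open scoped BigOperators

/-!
For distinct points `x₀, …, xₙ` of `ℂ^m` with `n ≤ p`, a product of `n` affine-linear polynomials
is, for each `j`, a polynomial of degree `≤ p` equal to `1` at `x_j` and vanishing at the other
points. Pairing its coefficients with the holomorphic coordinates of `V` is a linear form that
evaluates it on the image of `v_{p,q}`, so the points `v_{p,q}(x_k)` are linearly, hence
affinely, independent. Since `|A ∪ B| ≤ 2r ≤ p + 1`, both simplices are faces of the simplex on
`v_{p,q}(A ∪ B)`, and two faces of a simplex meet in their common face.
-/

open MvPolynomial Finset

namespace MvPolynomial

variable {σ K : Type*} [Field K]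

theorem exists_totalDegree_le_one_eval_eq_zero_eval_eq_one {x y : σ → K} (hxy : x ≠ y) :
    ∃ L : MvPolynomial σ K, L.totalDegree ≤ 1 ∧ eval x L = 0 ∧ eval y L = 1 := by
  obtain ⟨i, hi⟩ := Function.ne_iff.mp hxy
  refine ⟨(y i - x i)⁻¹ • (X i - C (x i)), ?_, by simp, ?_⟩
  · calc _ ≤ (X i - C (x i) : MvPolynomial σ K).totalDegree := totalDegree_smul_le _ _
      _ ≤ (X i : MvPolynomial σ K).totalDegree := totalDegree_sub_C_le _ _
      _ = 1 := totalDegree_X i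
  · simp [inv_mul_cancel₀ (sub_ne_zero.mpr hi.symm)]

theorem exists_totalDegree_le_card_eval_eq_one_eval_eq_zero (y : σ → K) (T : Finset (σ → K))
    (hy : y ∉ T) :
    ∃ P : MvPolynomial σ K, P.totalDegree ≤ #T ∧ eval y P = 1 ∧ ∀ x ∈ T, eval x P = 0 := by
  classical
  induction T using Finset.induction_on with
  | empty => exact ⟨1, by simp, by simp, by simp⟩
  | insert x T hxT ih =>
    obtain ⟨P, hPdeg, hPy, hPT⟩ := ih fun h => hy (mem_insert_of_mem h)
    obtain ⟨L, hLdeg, hLx, hLy⟩ :=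
      exists_totalDegree_le_one_eval_eq_zero_eval_eq_one <|
        ne_of_mem_of_not_mem (mem_insert_self x T) hy
    refine ⟨L * P, ?_, by simp [hLy, hPy], ?_⟩
    · rw [card_insert_of_notMem hxT]
      exact (totalDegree_mul L P).trans (by omega)
    · simp only [mem_insert, forall_eq_or_imp, map_mul, hLx, zero_mul, true_and]
      exact fun z hz => by rw [hPT z hz, mul_zero]

end MvPolynomial

def VeroneseIndex.holomorphic {m p : ℕ} (q : ℕ) (s : Fin m →₀ ℕ) (hs : ∑ i, s i ≤ p) :
    VeroneseIndex m p q :=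
  ⟨(⇑s, 0), hs, by simp⟩

theorem veronese_holomorphic {m p : ℕ} (q : ℕ) (x : Fin m → ℂ) (s : Fin m →₀ ℕ)
    (hs : ∑ i, s i ≤ p) : veronese m p q x (.holomorphic q s hs) = ∏ i, x i ^ s i := by
  simp [veronese, VeroneseIndex.holomorphic]

/-- Pairs the coefficients of `P` with the coordinates of the holomorphic monomials; monomials of
degree `> p` have no coordinate and are dropped. -/
noncomputable def veroneseDual (m p q : ℕ) (P : MvPolynomial (Fin m) ℂ) :
    Module.Dual ℂ (VeroneseIndex m p q → ℂ) :=
  ∑ s ∈ P.support, P.coeff s •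
    if h : ∑ i, s i ≤ p then LinearMap.proj (.holomorphic q s h) else 0

theorem veroneseDual_veronese (m p q : ℕ) {P : MvPolynomial (Fin m) ℂ} (hP : P.totalDegree ≤ p)
    (x : Fin m → ℂ) : veroneseDual m p q P (veronese m p q x) = eval x P := by
  rw [eval_eq', veroneseDual, LinearMap.sum_apply]
  refine sum_congr rfl fun s hs => ?_
  have hdeg : ∑ i, s i ≤ p :=
    calc ∑ i, s i = s.sum fun _ e => e := by simp [Finsupp.sum_fintype]
      _ ≤ P.totalDegree := le_totalDegree hs
      _ ≤ p := hP
  rw [LinearMap.smul_apply, dif_pos hdeg, LinearMap.proj_apply, veronese_holomorphic, smul_eq_mul]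

theorem veronese_linearIndependent (m p q : ℕ) (S : Finset (Fin m → ℂ)) (hS : #S ≤ p + 1) :
    LinearIndependent ℂ fun x : S => veronese m p q x := by
  classical
  have hlagrange (x : S) := exists_totalDegree_le_card_eval_eq_one_eval_eq_zero x.1
    (S.erase x) (notMem_erase _ _)
  choose P hPdeg hPx hPS using hlagrange
  have hPp (x : S) : (P x).totalDegree ≤ p := by
    have := card_erase_of_mem x.2
    grind
  refine .of_pairwise_dual_eq_zero_one _ (fun x => veroneseDual m p q (P x)) ?_ ?_
  · intro x y hxy
    have hy : (y : Fin m → ℂ) ∈ S.erase x :=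
      mem_erase.mpr ⟨fun h => hxy (Subtype.ext h).symm, y.2⟩
    rw [veroneseDual_veronese m p q (hPp x), hPS x y hy]
  · intro x
    rw [veroneseDual_veronese m p q (hPp x), hPx x]

theorem AffineIndependent.convexHull_image_inter {R α E : Type*} [Field R] [LinearOrder R]
    [IsStrictOrderedRing R] [AddCommGroup E] [Module R E] [DecidableEq α] [DecidableEq E]
    {f : α → E} {u s t : Finset α} (hf : AffineIndependent R fun x : u => f x) (hs : s ⊆ u)
    (ht : t ⊆ u) :
    convexHull R (f '' s) ∩ convexHull R (f '' t) = convexHull R (f '' ↑(s ∩ t)) := by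
  have hrange : Set.range (fun x : u => f x) = ↑(u.image f) := by ext; simp
  have himage := hf.range
  rw [hrange] at himage
  have hinj : Set.InjOn f u := fun x hx y hy hxy =>
    congrArg Subtype.val (hf.injective (a₁ := ⟨x, hx⟩) (a₂ := ⟨y, hy⟩) hxy)
  rw [coe_inter, hinj.image_inter (coe_subset.2 hs) (coe_subset.2 ht), ← coe_image, ← coe_image]
  exact (himage.convexHull_inter (image_subset_image hs) (image_subset_image ht)).symm

/-- For `r ≤ (p+1)/2`, two simplices with at most `r` vertices each in the image of the
Veronese-type embedding `v_{p,q}` are either disjoint or intersect along a common face: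
`conv(v(A)) ∩ conv(v(B)) = conv(v(A ∩ B))`. -/
theorem veronese_simplices_meet_in_face (m p q r : ℕ) (hr : 2 * r ≤ p + 1)
    (A B : Finset (Fin m → ℂ)) (hA : A.card ≤ r) (hB : B.card ≤ r) :
    convexHull ℝ (veronese m p q '' (A : Set (Fin m → ℂ))) ∩
        convexHull ℝ (veronese m p q '' (B : Set (Fin m → ℂ))) =
      convexHull ℝ (veronese m p q '' (((A ∩ B : Finset (Fin m → ℂ))) : Set (Fin m → ℂ))) := by
  classical
  have hAB : #(A ∪ B) ≤ p + 1 := (card_union_le A B).trans (by omega)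
  exact ((veronese_linearIndependent m p q _ hAB).restrict_scalars' ℝ).affineIndependent
    |>.convexHull_image_inter subset_union_left subset_union_right
end
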